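/- arXiv:2206.13931 — 7 statements merged into one kernel-verified Lean document; each statement's English description precedes it below -/
import Mathlib

section
/- For every real number x with x ≥ (1 + √5)/2 and every integer k ≥ 1, one has x^{4k+2} − x^{4k+1} − x − 1 > 0. -/
/-- For every real `x ≥ (1 + √5)/2` and every integer `k ≥ 1`,
`x^(4k+2) − x^(4k+1) − x − 1 > 0`. -/
theorem quartic_unit_inequality
    (x : ℝ) (hx : (1 + Real.sqrt 5) / 2 ≤ x) (k : ℕ) (hk : 1 ≤ k) :
    0 < x ^ (4 * k + 2) - x ^ (4 * k + 1) - x - 1 := by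
  have hs : Real.sqrt 5 ^ 2 = 5 := Real.sq_sqrt (by norm_num)
  have hsn : (0:ℝ) ≤ Real.sqrt 5 := Real.sqrt_nonneg 5
  have hx1 : 1 < x := by nlinarith
  have h2 : x + 1 ≤ x ^ 2 := by nlinarith
  have hpow : x ^ 4 ≤ x ^ (4 * k) :=
    pow_le_pow_right₀ (le_of_lt hx1) (by omega)
  have e1 : x ^ (4 * k + 2) = x ^ (4 * k) * x ^ 2 := by ring
  have e2 : x ^ (4 * k + 1) = x ^ (4 * k) * x := by ring
  rw [e1, e2]
  have hx0 : (0:ℝ) < x := by linarith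
  nlinarith [pow_pos hx0 (4 * k), sq_nonneg x, sq_nonneg (x - 1),
    mul_le_mul_of_nonneg_right hpow (by nlinarith : (0:ℝ) ≤ x ^ 2 - x - 1 + 1),
    pow_pos hx0 4]
end

section
/- Let t ≥ 3 be an integer and write t² − 4 = M·r² with M ≥ 2 squarefree and r ≥ 1, so that E₁(t) = (t + r√M)/2 is a unit of norm 1 of K = ℚ(√M). Then E₁(t) is the square of a unit of O_K of norm −1 with positive coefficients if and only if there exists an integer t' ≥ 1 such that t = t'² + 2; in that case, writing t'² + 4 = M·r'² with r' ≥ 1, one has r = r'·t' and E₁(t) = ((t' + r'√M)/2)². -/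
private lemma my_dvd_of_sq (M a r : ℤ) (hsqf : Squarefree M) (ha : a ≠ 0)
    (h : a ^ 2 ∣ M * r ^ 2) : a ∣ r := by
  have hg : 0 < Int.gcd a r := Int.gcd_pos_of_ne_zero_left r ha
  obtain ⟨a', r', hcop, haa, hrr⟩ := Int.exists_gcd_one hg
  set g : ℤ := (Int.gcd a r : ℤ) with hgdef
  have hgz : g ≠ 0 := (Int.natCast_pos.mpr hg).ne'
  rcases h with ⟨c, hc⟩
  rw [haa, hrr] at hc
  have hcancel : M * r' ^ 2 = a' ^ 2 * c := by
    have h1 : (M * r' ^ 2) * g ^ 2 = (a' ^ 2 * c) * g ^ 2 := by linear_combination hc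
    exact mul_right_cancel₀ (pow_ne_zero 2 hgz) h1
  have h2 : a' ^ 2 ∣ M * r' ^ 2 := ⟨c, hcancel⟩
  have hcop' : IsCoprime a' r' := Int.isCoprime_iff_gcd_eq_one.mpr hcop
  have hc2 : IsCoprime (a' ^ 2) (r' ^ 2) := hcop'.pow
  have hdvdM : a' ^ 2 ∣ M := hc2.dvd_of_dvd_mul_right h2
  have hu : IsUnit a' := hsqf a' (by rwa [← sq])
  have hadg : a ∣ g := by
    rcases Int.isUnit_iff.mp hu with h1 | h1 <;> exact ⟨a', by rw [haa, h1]; ring⟩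
  exact hadg.trans ⟨r', by rw [hrr]; ring⟩

private lemma coeff_eq (M : ℤ) (hirr : Irrational (Real.sqrt M)) (a b c d : ℤ)
    (h : (a : ℝ) + (b : ℝ) * Real.sqrt M = (c : ℝ) + (d : ℝ) * Real.sqrt M) :
    a = c ∧ b = d := by
  have hbd : b = d := by
    by_contra hne
    have hdb : ((d : ℝ) - (b : ℝ)) ≠ 0 := by
      intro hh
      exact hne (by exact_mod_cast (by linarith : (b:ℝ) = d))
    have hsq : Real.sqrt M = ((a : ℝ) - (c : ℝ)) / ((d : ℝ) - (b : ℝ)) := by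
      rw [eq_div_iff hdb]; linear_combination -h
    exact hirr ⟨((a : ℚ) - c) / ((d : ℚ) - b), by rw [hsq]; push_cast; ring⟩
  refine ⟨?_, hbd⟩
  have : (a : ℝ) = c := by rw [hbd] at h; linarith
  exact_mod_cast this

/-- With `t ≥ 3`, `t² − 4 = M·r²` (`M ≥ 2` squarefree, `r ≥ 1`),
the unit `E₁(t) = (t + r√M)/2` of norm `1` is the square of a unit of norm `−1`
with positive coefficients iff `t = t'² + 2` for some integer `t' ≥ 1`; and in
that case, writing `t'² + 4 = M·r'²` with `r' ≥ 1`, one has `r = r'·t'` and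
`E₁(t) = ((t' + r'√M)/2)²`. -/
theorem E1_is_square_iff
    (t M r : ℤ) (ht : 3 ≤ t) (hM : 2 ≤ M) (hsqf : Squarefree M) (hr : 1 ≤ r)
    (heq : t ^ 2 - 4 = M * r ^ 2) :
    ((∃ u v : ℤ, 1 ≤ u ∧ 1 ≤ v ∧ u ^ 2 - M * v ^ 2 = -4 ∧
        ((t : ℝ) + (r : ℝ) * Real.sqrt M) / 2 =
          (((u : ℝ) + (v : ℝ) * Real.sqrt M) / 2) ^ 2) ↔
      ∃ t' : ℤ, 1 ≤ t' ∧ t = t' ^ 2 + 2) ∧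
    ∀ t' r' : ℤ, 1 ≤ t' → 1 ≤ r' → t = t' ^ 2 + 2 → t' ^ 2 + 4 = M * r' ^ 2 →
      r = r' * t' ∧
      ((t : ℝ) + (r : ℝ) * Real.sqrt M) / 2 =
        (((t' : ℝ) + (r' : ℝ) * Real.sqrt M) / 2) ^ 2 := by
  have hM0 : (0:ℝ) ≤ (M:ℝ) := by exact_mod_cast (by linarith : (0:ℤ) ≤ M)
  have hs : (Real.sqrt M) ^ 2 = (M : ℝ) := Real.sq_sqrt hM0
  have hnotsq : ¬ IsSquare M := by
    rintro ⟨k, hk⟩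
    have : IsUnit k := hsqf k (by rw [hk])
    rcases Int.isUnit_iff.mp this with h1 | h1 <;> rw [h1] at hk <;> omega
  have hirr : Irrational (Real.sqrt M) :=
    (irrational_sqrt_intCast_iff_of_nonneg (by linarith)).mpr hnotsq
  have key : ∀ u v : ℤ, (((u : ℝ) + (v : ℝ) * Real.sqrt M) / 2) ^ 2
      = (((u^2 + M * v^2 : ℤ) : ℝ) + ((2 * u * v : ℤ) : ℝ) * Real.sqrt M) / 4 := by
    intro u v
    push_cast
    linear_combination ((v:ℝ)^2 / 4) * hs
  constructor
  · constructor
    · rintro ⟨u, v, hu, hv, hnorm, hsqe⟩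
      refine ⟨u, hu, ?_⟩
      rw [key u v] at hsqe
      have h2 : ((2 * t : ℤ) : ℝ) + ((2 * r : ℤ) : ℝ) * Real.sqrt M
          = ((u^2 + M * v^2 : ℤ) : ℝ) + ((2 * u * v : ℤ) : ℝ) * Real.sqrt M := by
        push_cast at hsqe ⊢
        linarith
      obtain ⟨h3, _⟩ := coeff_eq M hirr _ _ _ _ h2
      have h3' : 2 * t = u ^ 2 + M * v ^ 2 := h3
      linarith
    · rintro ⟨t', ht', hteq⟩
      have ht'0 : t' ≠ 0 := by omega
      have hdvd : t' ∣ r := by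
        apply my_dvd_of_sq M t' r hsqf ht'0
        exact ⟨t' ^ 2 + 4, by rw [← heq, hteq]; ring⟩
      obtain ⟨r', hrr'⟩ := hdvd
      have hr' : 1 ≤ r' := by
        by_contra hc
        push_neg at hc
        have h0 : t' * r' ≤ 0 :=
          mul_nonpos_of_nonneg_of_nonpos (by omega) (by omega)
        rw [hrr'] at hr; omega
      have hnorm' : t' ^ 2 + 4 = M * r' ^ 2 := by
        rw [hteq, hrr'] at heq
        have h1 : t' ^ 2 * (t' ^ 2 + 4) = t' ^ 2 * (M * r' ^ 2) := by
          linear_combination heq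
        exact mul_left_cancel₀ (pow_ne_zero 2 ht'0) h1
      refine ⟨t', r', ht', hr', by linear_combination hnorm', ?_⟩
      rw [key t' r']
      have ht2 : (t : ℝ) = (t' : ℝ) ^ 2 + 2 := by exact_mod_cast hteq
      have hn2 : (M : ℝ) * (r' : ℝ) ^ 2 = (t' : ℝ) ^ 2 + 4 := by exact_mod_cast hnorm'.symm
      have hrR : (r : ℝ) = (t' : ℝ) * (r' : ℝ) := by exact_mod_cast hrr'
      push_cast
      linear_combination ht2 / 2 + (Real.sqrt M / 2) * hrR - hn2 / 4
  · rintro t' r' ht' hr' hteq hnorm'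
    have h1 : M * r ^ 2 = M * (r' * t') ^ 2 := by
      rw [hteq] at heq
      linear_combination -heq + t' ^ 2 * hnorm'
    have h2 : r ^ 2 = (r' * t') ^ 2 := mul_left_cancel₀ (by omega : M ≠ 0) h1
    have h3 : (r - r' * t') * (r + r' * t') = 0 := by linear_combination h2
    have hreq : r = r' * t' := by
      rcases mul_eq_zero.mp h3 with h4 | h4
      · linarith
      · have : 0 < r' * t' := mul_pos (by omega) (by omega)
        linarith
    refine ⟨hreq, ?_⟩
    rw [key t' r']
    have ht2 : (t : ℝ) = (t' : ℝ) ^ 2 + 2 := by exact_mod_cast hteq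
    have hn2 : (M : ℝ) * (r' : ℝ) ^ 2 = (t' : ℝ) ^ 2 + 4 := by exact_mod_cast hnorm'.symm
    have hrR : (r : ℝ) = (r' : ℝ) * (t' : ℝ) := by exact_mod_cast hreq
    push_cast
    linear_combination ht2 / 2 + (Real.sqrt M / 2) * hrR - hn2 / 4
end

section
/- Let M ≥ 2 be a squarefree integer with fundamental unit ε_M. (i) The equation t² + 4 = M·r² has a solution in integers t, r ≥ 1 if and only if N(ε_M) = −1. (ii) If N(ε_M) = −1, let t' be the least integer t ≥ 1 for which t² + 4 = M·r² has a solution, with r' ≥ 1 the corresponding integer; then ε_M = (t' + r'√M)/2, the least integer t ≥ 1 for which t² − 4 = M·r² has a solution in integers r ≥ 1 is t = t'² + 2 with corresponding r = r'·t', and (t + r√M)/2 = ε_M². -/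
/-- `x` is a unit of the ring of integers of `ℚ(√M)` of norm `s`: it can be written
`x = (u + v√M)/2` with integers `u, v` satisfying `u² − M·v² = 4s`. -/
def IsUnitOfNorm (M s : ℤ) (x : ℝ) : Prop :=
  ∃ u v : ℤ, x = ((u : ℝ) + (v : ℝ) * Real.sqrt M) / 2 ∧ u ^ 2 - M * v ^ 2 = 4 * s

/-- `x` is the fundamental unit of `ℚ(√M)`: the smallest unit (of norm `1` or `−1`)
of the ring of integers that is `> 1` in the real embedding. -/
def IsFundamentalUnit (M : ℤ) (x : ℝ) : Prop :=
  (IsUnitOfNorm M 1 x ∨ IsUnitOfNorm M (-1) x) ∧ 1 < x ∧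
    ∀ y : ℝ, (IsUnitOfNorm M 1 y ∨ IsUnitOfNorm M (-1) y) → 1 < y → x ≤ y

namespace NMOS

lemma sq_emod_two (u : ℤ) : u ^ 2 % 2 = u % 2 := by
  rw [sq, Int.mul_emod]
  rcases Int.emod_two_eq u with h | h <;> rw [h] <;> norm_num

lemma trace_parity {M s u v : ℤ} (h : u ^ 2 - M * v ^ 2 = 4 * s) :
    Even u ↔ (Even M ∨ Even v) := by
  have h0 : u ^ 2 = M * v ^ 2 + 2 * (2 * s) := by linarith
  have h1 : u % 2 = M % 2 * (v % 2) % 2 := by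
    rw [← sq_emod_two, h0, Int.add_mul_emod_self_left, Int.mul_emod, sq_emod_two]
  rcases Int.emod_two_eq M with hm | hm <;> rcases Int.emod_two_eq v with hv | hv <;>
    rw [hm, hv] at h1 <;> norm_num at h1 <;>
    simp only [Int.even_iff] <;> omega

lemma sqrt_sq {M : ℤ} (hM : 0 ≤ M) : Real.sqrt M ^ 2 = (M : ℝ) :=
  Real.sq_sqrt (by exact_mod_cast hM)

lemma unit_mul {M s t : ℤ} {x y : ℝ} (hM : 0 ≤ M)
    (hx : IsUnitOfNorm M s x) (hy : IsUnitOfNorm M t y) :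
    IsUnitOfNorm M (s * t) (x * y) := by
  obtain ⟨u1, v1, e1, n1⟩ := hx
  obtain ⟨u2, v2, e2, n2⟩ := hy
  have p1 := trace_parity n1
  have p2 := trace_parity n2
  have hU : Even (u1 * u2 + M * (v1 * v2)) := by
    simp only [Int.even_add, Int.even_mul]
    tauto
  have hV : Even (u1 * v2 + u2 * v1) := by
    simp only [Int.even_add, Int.even_mul]
    tauto
  obtain ⟨U, hU⟩ := hU
  obtain ⟨V, hV⟩ := hV
  have hU2 : u1 * u2 + M * (v1 * v2) = 2 * U := by linarith
  have hV2 : u1 * v2 + u2 * v1 = 2 * V := by linarith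
  refine ⟨U, V, ?_, ?_⟩
  · have hsq := sqrt_sq hM
    have hU2' : (u1 : ℝ) * u2 + (M : ℝ) * ((v1 : ℝ) * v2) = 2 * (U : ℝ) := by
      exact_mod_cast hU2
    have hV2' : (u1 : ℝ) * v2 + (u2 : ℝ) * v1 = 2 * (V : ℝ) := by exact_mod_cast hV2
    rw [e1, e2]
    linear_combination ((v1 : ℝ) * v2 / 4) * hsq + (1 / 4) * hU2'
      + (Real.sqrt M / 4) * hV2'
  · have key : (2 * U) ^ 2 - M * (2 * V) ^ 2
        = (u1 ^ 2 - M * v1 ^ 2) * (u2 ^ 2 - M * v2 ^ 2) := by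
      rw [← hU2, ← hV2]; ring
    rw [n1, n2] at key
    nlinarith [key]

lemma unit_one (M : ℤ) : IsUnitOfNorm M 1 1 :=
  ⟨2, 0, by norm_num, by ring⟩

lemma unit_pow {M s : ℤ} {x : ℝ} (hM : 0 ≤ M) (hx : IsUnitOfNorm M s x) (n : ℕ) :
    IsUnitOfNorm M (s ^ n) (x ^ n) := by
  induction n with
  | zero => simpa using unit_one M
  | succ n ih =>
      rw [pow_succ, pow_succ]
      exact unit_mul hM ih hx

lemma conj_mul {M s u v : ℤ} {x : ℝ} (hM : 0 ≤ M)
    (hx : x = ((u : ℝ) + (v : ℝ) * Real.sqrt M) / 2) (hn : u ^ 2 - M * v ^ 2 = 4 * s) :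
    x * (((u : ℝ) - (v : ℝ) * Real.sqrt M) / 2) = (s : ℝ) := by
  have hsq := sqrt_sq hM
  have hn' : (u : ℝ) ^ 2 - (M : ℝ) * (v : ℝ) ^ 2 = 4 * (s : ℝ) := by exact_mod_cast hn
  subst hx
  linear_combination (-(v : ℝ) ^ 2 / 4) * hsq + (1 / 4) * hn'

lemma unit_inv {M s : ℤ} {x : ℝ} (hM : 0 ≤ M) (hs : s = -1 ∨ s = 1)
    (hx : IsUnitOfNorm M s x) : IsUnitOfNorm M s x⁻¹ := by
  obtain ⟨u, v, e, n⟩ := hx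
  have hc := conj_mul hM e n
  have hs2 : (s : ℝ) * s = 1 := by rcases hs with h | h <;> rw [h] <;> norm_num
  refine ⟨s * u, -(s * v), ?_, ?_⟩
  · have : x * ((((s * u : ℤ) : ℝ) + ((-(s * v) : ℤ) : ℝ) * Real.sqrt M) / 2) = 1 := by
      push_cast
      linear_combination (s : ℝ) * hc + hs2
    exact inv_eq_of_mul_eq_one_right this
  · rcases hs with h | h <;> subst h <;> linear_combination n

lemma trace_mul_eq {M s u v : ℤ} {x : ℝ} (hM : 0 ≤ M)
    (hx : x = ((u : ℝ) + (v : ℝ) * Real.sqrt M) / 2) (hn : u ^ 2 - M * v ^ 2 = 4 * s) :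
    (u : ℝ) * x = x ^ 2 + (s : ℝ) ∧ (v : ℝ) * Real.sqrt M * x = x ^ 2 - (s : ℝ) := by
  have hsq := sqrt_sq hM
  have hn' : (u : ℝ) ^ 2 - (M : ℝ) * (v : ℝ) ^ 2 = 4 * (s : ℝ) := by exact_mod_cast hn
  subst hx
  constructor
  · linear_combination (-(v : ℝ) ^ 2 / 4) * hsq + (1 / 4) * hn'
  · linear_combination ((v : ℝ) ^ 2 / 4) * hsq - (1 / 4) * hn'

lemma one_lt_sqrtM {M : ℤ} (hM : 2 ≤ M) : 1 < Real.sqrt M := by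
  rw [show (1 : ℝ) = Real.sqrt 1 by simp]
  exact Real.sqrt_lt_sqrt (by norm_num) (by exact_mod_cast by linarith)

lemma unit_coords_pos {M s u v : ℤ} {x : ℝ} (hM : 2 ≤ M) (hs : s = -1 ∨ s = 1)
    (hx : x = ((u : ℝ) + (v : ℝ) * Real.sqrt M) / 2) (hn : u ^ 2 - M * v ^ 2 = 4 * s)
    (hx1 : 1 < x) : 1 ≤ u ∧ 1 ≤ v := by
  have hM0 : (0 : ℤ) ≤ M := by linarith
  obtain ⟨T1, T2⟩ := trace_mul_eq hM0 hx hn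
  have hsR : (-1 : ℝ) ≤ (s : ℝ) ∧ (s : ℝ) ≤ 1 := by
    rcases hs with h | h <;> rw [h] <;> norm_num
  have hsM : 1 < Real.sqrt M := one_lt_sqrtM hM
  have hx0 : (0 : ℝ) ≤ x := by linarith
  have hu : (0 : ℝ) < (u : ℝ) := by
    by_contra h
    push_neg at h
    have h1 : (u : ℝ) * x ≤ 0 := mul_nonpos_of_nonpos_of_nonneg h hx0
    nlinarith [hsR.1, hsR.2]
  have hv : (0 : ℝ) < (v : ℝ) := by
    by_contra h
    push_neg at h
    have h0 : (v : ℝ) * Real.sqrt M ≤ 0 :=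
      mul_nonpos_of_nonpos_of_nonneg h (Real.sqrt_nonneg _)
    have h1 : (v : ℝ) * Real.sqrt M * x ≤ 0 := mul_nonpos_of_nonpos_of_nonneg h0 hx0
    nlinarith [hsR.1, hsR.2]
  constructor
  · exact_mod_cast Int.cast_pos.mp hu
  · exact_mod_cast Int.cast_pos.mp hv

lemma irrational_sqrtM {M : ℤ} (hM : 2 ≤ M) (hsqf : Squarefree M) :
    Irrational (Real.sqrt M) := by
  rw [irrational_sqrt_intCast_iff]
  refine ⟨?_, by linarith⟩
  rintro ⟨k, hk⟩
  have hu : IsUnit k := hsqf k (by rw [hk])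
  rcases Int.isUnit_iff.mp hu with h | h <;> subst h <;> omega

lemma norm_unique {M s t : ℤ} {x : ℝ} (hM : 2 ≤ M) (hsqf : Squarefree M)
    (h1 : IsUnitOfNorm M s x) (h2 : IsUnitOfNorm M t x) : s = t := by
  obtain ⟨u1, v1, e1, n1⟩ := h1
  obtain ⟨u2, v2, e2, n2⟩ := h2
  have hirr := irrational_sqrtM hM hsqf
  have he : (u1 : ℝ) + (v1 : ℝ) * Real.sqrt M = (u2 : ℝ) + (v2 : ℝ) * Real.sqrt M := by
    have := e1.symm.trans e2
    linarith
  have hv : v1 = v2 := by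
    by_contra hne
    have hne' : ((v2 : ℝ) - (v1 : ℝ)) ≠ 0 := by
      intro h
      apply hne
      have : (v1 : ℝ) = (v2 : ℝ) := by linarith
      exact_mod_cast this
    have hval : Real.sqrt M = ((u1 : ℝ) - u2) / ((v2 : ℝ) - v1) := by
      field_simp
      linarith
    exact hirr ⟨((u1 - u2 : ℤ) : ℚ) / ((v2 - v1 : ℤ) : ℚ), by push_cast; rw [hval]⟩
  subst hv
  have hu : u1 = u2 := by
    have : (u1 : ℝ) = (u2 : ℝ) := by linarith
    exact_mod_cast this
  subst hu
  linarith

lemma unit_gt_one {M t r : ℤ} (hM : 2 ≤ M) (ht : 1 ≤ t) (hr : 1 ≤ r) :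
    1 < ((t : ℝ) + (r : ℝ) * Real.sqrt M) / 2 := by
  have h1 := one_lt_sqrtM hM
  have ht' : (1 : ℝ) ≤ (t : ℝ) := by exact_mod_cast ht
  have hr' : (1 : ℝ) ≤ (r : ℝ) := by exact_mod_cast hr
  nlinarith

lemma unit_eq_pow {M : ℤ} (hM : 2 ≤ M) (hsqf : Squarefree M) {εM : ℝ}
    (hfund : IsFundamentalUnit M εM) {S : ℤ} (hS : S = -1 ∨ S = 1)
    (hεS : IsUnitOfNorm M S εM) {y : ℝ} {sy : ℤ} (hsy : sy = -1 ∨ sy = 1)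
    (hy : IsUnitOfNorm M sy y) (hy1 : 1 < y) :
    ∃ n : ℕ, 1 ≤ n ∧ y = εM ^ n ∧ sy = S ^ n := by
  classical
  have hM0 : (0 : ℤ) ≤ M := by linarith
  have hε1 : 1 < εM := hfund.2.1
  have hε0 : (0 : ℝ) < εM := by linarith
  have hex : ∃ k : ℕ, y < εM ^ k := pow_unbounded_of_one_lt y hε1
  have hPk : y < εM ^ Nat.find hex := Nat.find_spec hex
  have hk0 : Nat.find hex ≠ 0 := by
    intro h
    rw [h] at hPk
    simp at hPk
    linarith
  obtain ⟨n, hn⟩ : ∃ n, Nat.find hex = n + 1 := ⟨Nat.find hex - 1, by omega⟩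
  have hnP : ¬ y < εM ^ n := Nat.find_min hex (by omega)
  push_neg at hnP
  rw [hn] at hPk
  have hεn : (0 : ℝ) < εM ^ n := pow_pos hε0 n
  have hSn : S ^ n = 1 ∨ S ^ n = -1 := by
    rcases hS with h | h <;> subst h
    · rcases Nat.even_or_odd n with he | he
      · exact Or.inl he.neg_one_pow
      · exact Or.inr he.neg_one_pow
    · exact Or.inl (one_pow n)
  have hzU : IsUnitOfNorm M (sy * S ^ n) (y * εM⁻¹ ^ n) :=
    unit_mul hM0 hy (unit_pow hM0 (unit_inv hM0 hS hεS) n)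
  have hz1 : 1 ≤ y * εM⁻¹ ^ n := by
    rw [inv_pow, ← div_eq_mul_inv, le_div_iff₀ hεn]
    simpa using hnP
  have hzlt : y * εM⁻¹ ^ n < εM := by
    rw [inv_pow, ← div_eq_mul_inv, div_lt_iff₀ hεn]
    calc y < εM ^ (n + 1) := hPk
    _ = εM * εM ^ n := by ring
  rcases eq_or_lt_of_le hz1 with heq | hlt
  · have hyn : y = εM ^ n := by
      have h' : y * (εM ^ n)⁻¹ = 1 := by rw [← inv_pow]; exact heq.symm
      field_simp at h'
      exact h'
    have hn1 : 1 ≤ n := by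
      rcases Nat.eq_zero_or_pos n with h | h
      · exfalso
        subst h
        simp only [pow_zero] at hyn
        rw [hyn] at hy1
        exact lt_irrefl _ hy1
      · exact h
    refine ⟨n, hn1, hyn, ?_⟩
    have hynU : IsUnitOfNorm M (S ^ n) y := by
      rw [hyn]; exact unit_pow hM0 hεS n
    exact norm_unique hM hsqf hy hynU
  · exfalso
    have hor : IsUnitOfNorm M 1 (y * εM⁻¹ ^ n) ∨ IsUnitOfNorm M (-1) (y * εM⁻¹ ^ n) := by
      have hsS : sy * S ^ n = 1 ∨ sy * S ^ n = -1 := by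
        rcases hsy with h | h <;> rcases hSn with h' | h' <;> rw [h, h'] <;> norm_num
      rcases hsS with h | h
      · exact Or.inl (h ▸ hzU)
      · exact Or.inr (h ▸ hzU)
    have := hfund.2.2 _ hor hlt
    linarith

end NMOS

open NMOS in
set_option maxHeartbeats 1000000 in
/-- (i) `t² + 4 = M·r²` has a solution in integers `t, r ≥ 1` iff
`N(ε_M) = −1`.  (ii) If `N(ε_M) = −1` and `t'` is the least such `t`, with `r'`
the corresponding integer, then `ε_M = (t' + r'√M)/2`, the least `t ≥ 1` with
`t² − 4 = M·r²` solvable is `t'² + 2` with corresponding `r = r'·t'`, and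
`(t + r√M)/2 = ε_M²`. -/
theorem norm_minus_one_solutions
    (M : ℤ) (hM : 2 ≤ M) (hsqf : Squarefree M)
    (εM : ℝ) (hfund : IsFundamentalUnit M εM)
    (S : ℤ) (hS : S = -1 ∨ S = 1) (hεS : IsUnitOfNorm M S εM) :
    ((∃ t r : ℤ, 1 ≤ t ∧ 1 ≤ r ∧ t ^ 2 + 4 = M * r ^ 2) ↔ S = -1) ∧
    (S = -1 → ∀ t' r' : ℤ, 1 ≤ t' → 1 ≤ r' → t' ^ 2 + 4 = M * r' ^ 2 →
      (∀ t : ℤ, 1 ≤ t → (∃ r : ℤ, 1 ≤ r ∧ t ^ 2 + 4 = M * r ^ 2) → t' ≤ t) →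
      εM = ((t' : ℝ) + (r' : ℝ) * Real.sqrt M) / 2 ∧
      (t' ^ 2 + 2) ^ 2 - 4 = M * (r' * t') ^ 2 ∧
      (∀ t : ℤ, 1 ≤ t → (∃ r : ℤ, 1 ≤ r ∧ t ^ 2 - 4 = M * r ^ 2) → t' ^ 2 + 2 ≤ t) ∧
      (((t' ^ 2 + 2 : ℤ) : ℝ) + ((r' * t' : ℤ) : ℝ) * Real.sqrt M) / 2 = εM ^ 2) := by
  have hM0 : (0 : ℤ) ≤ M := by linarith
  have hε1 : 1 < εM := hfund.2.1
  constructor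
  · constructor
    · rintro ⟨t, r, ht, hr, heq⟩
      have hxU : IsUnitOfNorm M (-1) (((t : ℝ) + (r : ℝ) * Real.sqrt M) / 2) :=
        ⟨t, r, rfl, by linarith⟩
      have hx1 := unit_gt_one hM ht hr
      obtain ⟨n, hn1, -, hnorm⟩ :=
        unit_eq_pow hM hsqf hfund hS hεS (Or.inl rfl) hxU hx1
      rcases hS with h | h
      · exact h
      · exfalso
        rw [h, one_pow] at hnorm
        omega
    · intro h
      subst h
      obtain ⟨u, v, he, hn⟩ := hεS
      obtain ⟨hu, hv⟩ := unit_coords_pos hM (Or.inl rfl) he hn hε1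
      exact ⟨u, v, hu, hv, by linarith⟩
  · intro hS1
    subst hS1
    intro t' r' ht' hr' heq hmin
    have hxU : IsUnitOfNorm M (-1) (((t' : ℝ) + (r' : ℝ) * Real.sqrt M) / 2) :=
      ⟨t', r', rfl, by linarith⟩
    have hx1 := unit_gt_one hM ht' hr'
    have hεx : εM ≤ ((t' : ℝ) + (r' : ℝ) * Real.sqrt M) / 2 :=
      hfund.2.2 _ (Or.inr hxU) hx1
    obtain ⟨u, v, he, hn⟩ := hεS
    obtain ⟨hu, hv⟩ := unit_coords_pos hM (Or.inl rfl) he hn hε1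
    have hmu : t' ≤ u := hmin u hu ⟨v, hv, by linarith⟩
    have hxε : ((t' : ℝ) + (r' : ℝ) * Real.sqrt M) / 2 ≤ εM := by
      by_contra hcon
      push_neg at hcon
      have T1 := (trace_mul_eq hM0 he hn).1
      have T2 := (trace_mul_eq hM0 rfl (show t' ^ 2 - M * r' ^ 2 = 4 * (-1) by linarith)).1
      push_cast at T1 T2
      set x := ((t' : ℝ) + (r' : ℝ) * Real.sqrt M) / 2 with hxd
      have hkey : (x - εM) * (εM * x + 1) > 0 := by
        apply mul_pos (by linarith)
        nlinarith
      have hid : εM * x * ((t' : ℝ) - (u : ℝ)) = (x - εM) * (εM * x + 1) := by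
        linear_combination εM * T2 - x * T1
      have hpos : (0 : ℝ) < εM * x := mul_pos (by linarith) (by linarith)
      have hut : (t' : ℝ) ≤ (u : ℝ) := by exact_mod_cast hmu
      linarith [hid, hkey, mul_nonneg hpos.le (sub_nonneg.mpr hut)]
    have hA : εM = ((t' : ℝ) + (r' : ℝ) * Real.sqrt M) / 2 := le_antisymm hεx hxε
    have hB : (t' ^ 2 + 2) ^ 2 - 4 = M * (r' * t') ^ 2 := by
      linear_combination (t' ^ 2) * heq
    have hsq := sqrt_sq hM0
    have heqR : (t' : ℝ) ^ 2 + 4 = (M : ℝ) * (r' : ℝ) ^ 2 := by exact_mod_cast heq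
    have hD : (((t' ^ 2 + 2 : ℤ) : ℝ) + ((r' * t' : ℤ) : ℝ) * Real.sqrt M) / 2 = εM ^ 2 := by
      rw [hA]
      push_cast
      linear_combination (-(r' : ℝ) ^ 2 / 4) * hsq + (1 / 4) * heqR
    refine ⟨hA, hB, ?_, hD⟩
    rintro t ht ⟨r, hr, htr⟩
    have hzU : IsUnitOfNorm M 1 (((t : ℝ) + (r : ℝ) * Real.sqrt M) / 2) :=
      ⟨t, r, rfl, by linarith⟩
    have hz1 := unit_gt_one hM ht hr
    obtain ⟨n, hn1, hzn, hnorm⟩ :=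
      unit_eq_pow hM hsqf hfund (Or.inl rfl) ⟨u, v, he, hn⟩ (Or.inr rfl) hzU hz1
    have hev : Even n := (neg_one_pow_eq_one_iff_even (by decide)).mp hnorm.symm
    obtain ⟨m, hm⟩ := hev
    have hm1 : 1 ≤ m := by omega
    have hε2 : (1 : ℝ) < εM ^ 2 := by nlinarith
    have hge : εM ^ 2 ≤ ((t : ℝ) + (r : ℝ) * Real.sqrt M) / 2 := by
      rw [hzn, show n = 2 * m by omega, pow_mul]
      exact le_self_pow₀ (by linarith) (by omega)
    -- trace comparison for norm-one units
    have hx2rep : εM ^ 2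
        = (((t' ^ 2 + 2 : ℤ) : ℝ) + ((r' * t' : ℤ) : ℝ) * Real.sqrt M) / 2 := hD.symm
    have hB' : (t' ^ 2 + 2) ^ 2 - M * (r' * t') ^ 2 = 4 * 1 := by linarith
    have htr' : t ^ 2 - M * r ^ 2 = 4 * 1 := by linarith
    have T1 := (trace_mul_eq hM0 hx2rep hB').1
    have T2 := (trace_mul_eq hM0 rfl htr').1
    push_cast at T1 T2
    set z := ((t : ℝ) + (r : ℝ) * Real.sqrt M) / 2 with hzd
    set w := εM ^ 2 with hwd
    have hz0 : (0 : ℝ) < z := by linarith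
    have hw0 : (0 : ℝ) < w := by linarith
    have hkey : (z - w) * (z * w - 1) ≥ 0 := by
      apply mul_nonneg (by linarith)
      nlinarith
    have hid2 : z * w * ((t : ℝ) - ((t' : ℝ) ^ 2 + 2)) = (z - w) * (z * w - 1) := by
      linear_combination w * T2 - z * T1
    by_contra hcon
    push_neg at hcon
    have hco : (t : ℝ) + 1 ≤ (t' : ℝ) ^ 2 + 2 := by
      have := Int.add_one_le_iff.mpr hcon
      exact_mod_cast this
    have h3 : (0 : ℝ) < z * w * (((t' : ℝ) ^ 2 + 2) - (t : ℝ)) :=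
      mul_pos (mul_pos hz0 hw0) (by linarith)
    linarith [hid2, hkey, h3]
end

section
/- Let p be an odd prime, a ≥ 1 and t ≥ 1 integers, δ ∈ {1, 2}, and s ∈ {−1, 1}. Set d = a²p⁴t² − 2δas and consider in the ring ℤ[√d] the element α = (a·p⁴·t² − δs) + p²·t·√d. Then: (1) α·ᾱ = δ², where ᾱ = (a·p⁴·t² − δs) − p²·t·√d (so that E = α/δ is a unit of norm 1 of ℚ(√d)); and (2) α ≡ −δs (mod p²·ℤ[√d]), so E ≡ −s (mod p²). -/
/-- with `d = a²p⁴t² − 2δas` and `α = (ap⁴t² − δs) + p²t√d ∈ ℤ[√d]`: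
(1) `α·ᾱ = δ²`, so `E = α/δ` is a unit of norm `1`; and
(2) `α ≡ −δs (mod p²ℤ[√d])`, so `E ≡ −s (mod p²)`. -/
theorem unit_local_pth_power
    (p : ℕ) (hp : p.Prime) (hodd : Odd p)
    (a t δ s : ℤ) (ha : 1 ≤ a) (ht : 1 ≤ t) (hδ : δ = 1 ∨ δ = 2) (hs : s = -1 ∨ s = 1)
    (d : ℤ) (hd : d = a ^ 2 * (p : ℤ) ^ 4 * t ^ 2 - 2 * δ * a * s) :
    (⟨a * (p : ℤ) ^ 4 * t ^ 2 - δ * s, (p : ℤ) ^ 2 * t⟩ : ℤ√d) *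
        star (⟨a * (p : ℤ) ^ 4 * t ^ 2 - δ * s, (p : ℤ) ^ 2 * t⟩ : ℤ√d) =
      ((δ ^ 2 : ℤ) : ℤ√d) ∧
    (((p : ℤ) ^ 2 : ℤ) : ℤ√d) ∣
      ((⟨a * (p : ℤ) ^ 4 * t ^ 2 - δ * s, (p : ℤ) ^ 2 * t⟩ : ℤ√d) -
        ((-(δ * s) : ℤ) : ℤ√d)) := by
  have hs2 : s ^ 2 = 1 := by rcases hs with h | h <;> simp [h]
  constructor
  · ext <;>
      simp [Zsqrtd.re_mul, Zsqrtd.im_mul, Zsqrtd.star_mk, hd, Zsqrtd.re_intCast,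
        Zsqrtd.im_intCast, pow_two, -Int.cast_pow]
    · linear_combination δ ^ 2 * hs2
    · ring
  · rw [Zsqrtd.intCast_dvd]
    refine ⟨?_, ?_⟩ <;> simp [Zsqrtd.re_intCast, Zsqrtd.im_intCast] <;>
      first
      | exact ⟨a * (p : ℤ) ^ 2 * t ^ 2, by ring⟩
      | exact ⟨t, by ring⟩
end

section
/- Let p be an odd prime, s ∈ {−1, 1}, and T an integer with T² ≡ 2s (mod p²). Then in the ring ℤ[√(T² − 4s)] one has (T + √(T² − 4s))⁴ ≡ −16 (mod p²·ℤ[√(T² − 4s)]). Equivalently, the unit E_s(T) = (T + √(T² − 4s))/2 of norm s satisfies E_s(T)⁴ ≡ −1 (mod p²), so E_s(T) is a local pth power at p. -/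
/-- if `T² ≡ 2s (mod p²)` then in `ℤ[√(T² − 4s)]` one has
`(T + √(T² − 4s))⁴ ≡ −16 (mod p²)`; equivalently the norm-`s` unit
`E_s(T) = (T + √(T² − 4s))/2` satisfies `E_s(T)⁴ ≡ −1 (mod p²)`, so it is a
local `p`th power at `p`. -/
theorem fourth_power_cong_neg_sixteen
    (p : ℕ) (hp : p.Prime) (hodd : Odd p)
    (s T : ℤ) (hs : s = -1 ∨ s = 1)
    (hT : T ^ 2 ≡ 2 * s [ZMOD ((p : ℤ) ^ 2)]) :
    (((p : ℤ) ^ 2 : ℤ) : ℤ√(T ^ 2 - 4 * s)) ∣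
      ((⟨T, 1⟩ : ℤ√(T ^ 2 - 4 * s)) ^ 4 - ((-16 : ℤ) : ℤ√(T ^ 2 - 4 * s))) := by
  obtain ⟨k, hk⟩ := hT.dvd
  have hs2 : s ^ 2 = 1 := by rcases hs with rfl | rfl <;> norm_num
  refine ⟨⟨8 * (p : ℤ) ^ 2 * k ^ 2, -8 * T * k⟩, ?_⟩
  have hT2 : T ^ 2 = 2 * s - (p : ℤ) ^ 2 * k := by linarith
  rw [Zsqrtd.ext_iff]
  constructor
  · simp only [pow_succ, pow_zero, one_mul, Zsqrtd.re_mul, Zsqrtd.im_mul,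
      Zsqrtd.re_sub, Zsqrtd.im_sub, Zsqrtd.re_intCast, Zsqrtd.im_intCast]
    linear_combination (8 * (T ^ 2 - 2 * s - (p : ℤ) ^ 2 * k)) * hT2 - 16 * hs2
  · simp only [pow_succ, pow_zero, one_mul, Zsqrtd.re_mul, Zsqrtd.im_mul,
      Zsqrtd.re_sub, Zsqrtd.im_sub, Zsqrtd.re_intCast, Zsqrtd.im_intCast]
    linear_combination 8 * T * hT2
end

section
/- Let p be an odd prime, q a prime with q ≡ 1 (mod p), s ∈ {−1, 1}, and c an integer whose residue modulo q is nonzero and is not a pth power in 𝔽_q. Let t ≥ 1 be an integer with 2·c·p²·t ≡ c² + s (mod q). Write p⁴t² − s = M·r² with M squarefree and r ≥ 1, and assume M ≥ 2; set K = ℚ(√M) and E = p²·t + r·√M ∈ O_K, a unit of norm s. Then N(E − c) = (p²t − c)² − (p⁴t² − s) = c² + s − 2cp²t ≡ 0 (mod q), and E is not a pth power in O_K: there is no β ∈ O_K with β^p = E. -/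
/-!
If `β = (u + v√M)/2` satisfied `β ^ p = E`, then `z = u + v√M ∈ ℤ[√M]` would satisfy
`z ^ p = 2 ^ p E`. Since `N(E - c) ≡ 0 (mod q)`, some square root `m` of `M` in an extension
`L` of `𝔽_q` of degree 1 or 2 gives a ring map `ℤ[√M] → L`, `√M ↦ m`, sending `E` to `c`.
So `2 ^ p c` is a `p`th power in `L`; taking norms, `(2 ^ p c) ^ [L : 𝔽_q]` is a `p`th power
in `𝔽_q`, and as `[L : 𝔽_q]` is coprime to the odd `p`, so is `2 ^ p c`, hence `c` (here
`q ≠ 2`, since every element of `𝔽_2` is a `p`th power).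
-/

open Polynomial IntermediateField Module

theorem exists_pow_eq_of_coprime_of_pow_eq {G₀ : Type*} [CommGroupWithZero G₀] {d p : ℕ}
    (hdp : d.Coprime p) {c x : G₀} (hx : x ^ p = c ^ d) : ∃ w, w ^ p = c := by
  rcases eq_or_ne c 0 with rfl | hc
  · rcases p.eq_zero_or_pos with rfl | hp
    · simp [(Nat.coprime_zero_right d).mp hdp] at hx
    · exact ⟨0, zero_pow hp.ne'⟩
  obtain ⟨a, b, hab⟩ := Nat.isCoprime_iff_coprime.mpr hdp
  have pow_zpow_comm (y : G₀) (k : ℤ) : (y ^ k) ^ p = (y ^ p) ^ k := by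
    rw [← zpow_natCast, ← zpow_natCast, ← zpow_mul, ← zpow_mul, mul_comm]
  refine ⟨x ^ a * c ^ b, ?_⟩
  rw [mul_pow, pow_zpow_comm, pow_zpow_comm, hx, ← zpow_natCast, ← zpow_natCast, ← zpow_mul,
    ← zpow_mul, ← zpow_add₀ hc, mul_comm, mul_comm (p : ℤ), hab, zpow_one]

section FieldExtension

variable {K L : Type*} [Field K] [Field L] [Algebra K L]

theorem exists_pow_eq_of_algebraMap_eq_pow [FiniteDimensional K L] {p : ℕ}
    (hp : (finrank K L).Coprime p) {c : K} {y : L} (hy : y ^ p = algebraMap K L c) :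
    ∃ w : K, w ^ p = c :=
  exists_pow_eq_of_coprime_of_pow_eq hp (x := Algebra.norm K y) <| by
    rw [← map_pow, hy, Algebra.norm_algebraMap]

theorem isIntegral_of_sq_eq_algebraMap {a : K} {m : L} (hm : m ^ 2 = algebraMap K L a) :
    IsIntegral K m :=
  ⟨_, monic_X_pow_sub_C a two_ne_zero, by simp [hm]⟩

theorem finrank_adjoin_le_two_of_sq_eq {a : K} {m : L} (hm : m ^ 2 = algebraMap K L a) :
    finrank K K⟮m⟯ ≤ 2 := by
  have hroot : aeval m (X ^ 2 - C a) = 0 := by simp [hm]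
  rw [adjoin.finrank (isIntegral_of_sq_eq_algebraMap hm),
    ← natDegree_X_pow_sub_C (n := 2) (r := a)]
  exact natDegree_le_natDegree
    (minpoly.degree_le_of_ne_zero K m (X_pow_sub_C_ne_zero two_pos a) hroot)

end FieldExtension

theorem Zsqrtd.exists_lift_eq {d : ℤ} {R : Type*} [CommRing R] [IsDomain R] {m c : R}
    (hm : m * m = d) {a b : ℤ} (hc : ((a : R) - c) ^ 2 = d * (b : R) ^ 2) :
    ∃ φ : ℤ√d →+* R, φ ⟨a, b⟩ = c := by
  have h : (c - (a + b * m)) * (c - (a + b * -m)) = 0 := by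
    linear_combination hc - (b : R) ^ 2 * hm
  rcases mul_eq_zero.mp h with h | h
  · exact ⟨Zsqrtd.lift ⟨m, hm⟩, by simp [sub_eq_zero.mp h]⟩
  · exact ⟨Zsqrtd.lift ⟨-m, by rw [neg_mul_neg, hm]⟩, by simp [sub_eq_zero.mp h]⟩

theorem Zsqrtd.exists_pow_eq_of_pow_eq {K : Type*} [Field K] {d : ℤ} {p : ℕ} (hp : Odd p)
    {z : ℤ√d} {a b : ℤ} (hz : z ^ p = ⟨a, b⟩) {c : K}
    (hc : ((a : K) - c) ^ 2 = d * (b : K) ^ 2) : ∃ w : K, w ^ p = c := by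
  obtain ⟨m, hm⟩ := IsAlgClosed.exists_pow_nat_eq (algebraMap K (AlgebraicClosure K) d) two_pos
  have : FiniteDimensional K K⟮m⟯ :=
    adjoin.finiteDimensional (isIntegral_of_sq_eq_algebraMap hm)
  have hcop : (finrank K K⟮m⟯).Coprime p := by
    have := finrank_adjoin_le_two_of_sq_eq hm
    interval_cases h : finrank K K⟮m⟯
    · exact absurd h Module.finrank_pos.ne'
    · exact Nat.coprime_one_left p
    · exact Nat.coprime_two_left.mpr hp
  have hgen : AdjoinSimple.gen K m * AdjoinSimple.gen K m = d :=
    Subtype.ext (by simpa [sq] using hm)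
  obtain ⟨φ, hφ⟩ := Zsqrtd.exists_lift_eq hgen (c := algebraMap K K⟮m⟯ c)
    (by simpa using congrArg (algebraMap K K⟮m⟯) hc)
  exact exists_pow_eq_of_algebraMap_eq_pow hcop (y := φ z) (by rw [← map_pow, hz, hφ])

theorem Int.ne_mul_self_of_squarefree {d : ℤ} (hd : Squarefree d) (h1 : d ≠ 1) (n : ℤ) :
    d ≠ n * n := by
  rintro rfl
  rcases Int.isUnit_iff.mp (hd n dvd_rfl) with rfl | rfl <;> simp at h1

theorem ZMod.two_ne_zero_of_not_pow_eq {q p : ℕ} (hq : q.Prime) (hp : p ≠ 0) {c : ZMod q}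
    (hc : ¬∃ y, y ^ p = c) : (2 : ZMod q) ≠ 0 := by
  intro h2
  obtain rfl : q = 2 := (Nat.prime_dvd_prime_iff_eq hq Nat.prime_two).mp
    ((ZMod.natCast_eq_zero_iff 2 q).mp (by exact_mod_cast h2))
  exact hc ⟨c, by fin_cases c; exacts [zero_pow hp, one_pow p]⟩

theorem unit_not_global_pth_power_general
    (p q : ℕ) (hoddp : Odd p) (hq : q.Prime)
    (s : ℤ)
    (c : ℤ) (hcp : ¬∃ y : ZMod q, y ^ p = (c : ZMod q))
    (t : ℤ)
    (htcong : 2 * c * (p : ℤ) ^ 2 * t ≡ c ^ 2 + s [ZMOD (q : ℤ)])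
    (M r : ℤ) (hM : 2 ≤ M) (hsqf : Squarefree M)
    (hMr : (p : ℤ) ^ 4 * t ^ 2 - s = M * r ^ 2) :
    (((p : ℤ) ^ 2 * t - c) ^ 2 - M * r ^ 2 = c ^ 2 + s - 2 * c * (p : ℤ) ^ 2 * t ∧
      (q : ℤ) ∣ c ^ 2 + s - 2 * c * (p : ℤ) ^ 2 * t) ∧
    ¬∃ u v : ℤ, (4 : ℤ) ∣ u ^ 2 - M * v ^ 2 ∧
      (((u : ℝ) + (v : ℝ) * Real.sqrt M) / 2) ^ p =
        (p : ℝ) ^ 2 * (t : ℝ) + (r : ℝ) * Real.sqrt M := by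
  have : Fact q.Prime := ⟨hq⟩
  have hdvd : (q : ℤ) ∣ c ^ 2 + s - 2 * c * (p : ℤ) ^ 2 * t := htcong.dvd
  refine ⟨⟨by rw [← hMr]; ring, hdvd⟩, ?_⟩
  rintro ⟨u, v, -, hpow⟩
  have hz : (⟨u, v⟩ : ℤ√M) ^ p = ⟨2 ^ p * ((p : ℤ) ^ 2 * t), 2 ^ p * r⟩ := by
    apply Zsqrtd.toReal_injective (by omega) (Int.ne_mul_self_of_squarefree hsqf (by omega))
    simp only [map_pow, Zsqrtd.toReal_apply]
    rw [← div_mul_cancel₀ ((u : ℝ) + v * √M) (two_ne_zero' ℝ), mul_pow, hpow]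
    push_cast
    ring
  have hnorm : ((2 ^ p * ((p : ℤ) ^ 2 * t) : ℤ) - (2 ^ p * c : ZMod q)) ^ 2 =
      M * ((2 ^ p * r : ℤ) : ZMod q) ^ 2 := by
    have h0 : ((c ^ 2 + s - 2 * c * (p : ℤ) ^ 2 * t : ℤ) : ZMod q) = 0 :=
      (ZMod.intCast_zmod_eq_zero_iff_dvd _ q).mpr hdvd
    have hMr' := congrArg (Int.cast : ℤ → ZMod q) hMr
    push_cast at h0 hMr' ⊢
    linear_combination ((2 : ZMod q) ^ p) ^ 2 * (h0 + hMr')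
  obtain ⟨w, hw⟩ := Zsqrtd.exists_pow_eq_of_pow_eq hoddp hz hnorm
  have h2 := ZMod.two_ne_zero_of_not_pow_eq hq hoddp.pos.ne' hcp
  exact hcp ⟨w / 2, by rw [div_pow, hw]; field_simp⟩

/-- with `p` an odd prime, `q ≡ 1 (mod p)` prime, `s = ±1`,
`c` an integer whose residue mod `q` is nonzero and not a `p`th power in `𝔽_q`,
`t ≥ 1` with `2cp²t ≡ c² + s (mod q)`, and `p⁴t² − s = M·r²` (`M ≥ 2` squarefree,
`r ≥ 1`), the unit `E = p²t + r√M` of `O_{ℚ(√M)}` of norm `s` satisfies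
`N(E − c) = (p²t − c)² − (p⁴t² − s) = c² + s − 2cp²t ≡ 0 (mod q)` and `E` is not
a `p`th power in `O_K`. -/
theorem unit_not_global_pth_power
    (p q : ℕ) (hp : p.Prime) (hoddp : Odd p) (hq : q.Prime) (hqp : q ≡ 1 [MOD p])
    (s : ℤ) (hs : s = -1 ∨ s = 1)
    (c : ℤ) (hc0 : (c : ZMod q) ≠ 0) (hcp : ¬∃ y : ZMod q, y ^ p = (c : ZMod q))
    (t : ℤ) (ht : 1 ≤ t)
    (htcong : 2 * c * (p : ℤ) ^ 2 * t ≡ c ^ 2 + s [ZMOD (q : ℤ)])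
    (M r : ℤ) (hM : 2 ≤ M) (hsqf : Squarefree M) (hr : 1 ≤ r)
    (hMr : (p : ℤ) ^ 4 * t ^ 2 - s = M * r ^ 2) :
    (((p : ℤ) ^ 2 * t - c) ^ 2 - M * r ^ 2 = c ^ 2 + s - 2 * c * (p : ℤ) ^ 2 * t ∧
      (q : ℤ) ∣ c ^ 2 + s - 2 * c * (p : ℤ) ^ 2 * t) ∧
    ¬∃ u v : ℤ, (4 : ℤ) ∣ u ^ 2 - M * v ^ 2 ∧
      (((u : ℝ) + (v : ℝ) * Real.sqrt M) / 2) ^ p =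
        (p : ℝ) ^ 2 * (t : ℝ) + (r : ℝ) * Real.sqrt M :=
  unit_not_global_pth_power_general p q hoddp hq s c hcp t htcong M r hM hsqf hMr
end

section
/- For every odd prime p, there exist infinitely many squarefree integers M ≥ 2 with the following property: there are integers t ≥ 1 and r ≥ 1 with p⁴t² − 1 = M·r² such that the unit ε = p²·t + r·√M of the ring of integers of ℚ(√M) (a unit of norm 1, which satisfies ε² ≡ −1 (mod p²·O_K) and hence is a local pth power at p) is not a pth power in O_{ℚ(√M)}. In particular there are infinitely many real quadratic fields whose normalized p-adic regulator is divisible by p, hence infinitely many non-p-rational real quadratic fields. -/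
/-!
Write `p⁴t² - 1 = M_t r_t²` with `M_t` squarefree, so that `ε = p²t + r_t√M_t` solves the Pell
equation `x² - M_t y² = 1`; then `ε² + 1 = 2p²t·ε`. If `ε = η^p` with `η = (u + v√M_t)/2`, taking
norms gives `N(η) = 1` (as `p` is odd), so `η > 1` forces `u, v ≥ 1` and `η > √M_t/2`. Hence
`(M_t/4)^p < ε² < 4p⁴t²`, which fails as soon as `M_t^p ≥ 4^(p+1) p⁴ t²`.

Such `t` exist with `M_t` arbitrarily large. For a fixed `M` the values `x = p²t` solving
`x² - M y² = 1` at least double from one to the next, so `t ↦ (M_t, ⌊log₂ t⌋)` is injective; for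
`t ≤ T` this bounds the number of `t` with `M_t ≤ C` by `(C + 1)(log₂ T + 1)`, and taking
`C ≈ T^(2/3)` leaves some `t ≤ T` with `M_t³ > 4^(p+1) p⁴ t²`.
-/

open Real

theorem two_mul_le_of_pell_of_lt {d x₁ y₁ x₂ y₂ : ℤ} (hd : 0 < d) (hx₁ : 0 < x₁) (hy₁ : 0 ≤ y₁)
    (hy₂ : 0 ≤ y₂) (h₁ : x₁ ^ 2 - d * y₁ ^ 2 = 1) (h₂ : x₂ ^ 2 - d * y₂ ^ 2 = 1)
    (hlt : x₁ < x₂) : 2 * x₁ ≤ x₂ := by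
  -- `X + Y√d = (x₂ + y₂√d) / (x₁ + y₁√d)` is a solution with `Y > 0`, hence `X ≥ 2`.
  set X := x₁ * x₂ - d * y₁ * y₂
  set Y := x₁ * y₂ - x₂ * y₁
  have hx₂ : x₂ = X * x₁ + d * Y * y₁ := by linear_combination (-x₂) * h₁
  have hXY : X ^ 2 - d * Y ^ 2 = 1 := by linear_combination (x₂ ^ 2 - d * y₂ ^ 2) * h₁ + h₂
  have hY : 0 < Y := by
    have : (x₂ * y₁) ^ 2 < (x₁ * y₂) ^ 2 := by nlinarith
    linarith [lt_of_pow_lt_pow_left₀ 2 (by positivity) this]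
  have hX : 0 < X := by nlinarith
  have hX2 : 2 ≤ X := by nlinarith
  nlinarith

theorem exists_mul_succ_lt_two_pow (c : ℕ) : ∃ j, c * (j + 1) < 2 ^ j := by
  refine ⟨3 * c, lt_of_lt_of_le ?_ (?_ : (c + 1) ^ 3 ≤ 2 ^ (3 * c))⟩
  · nlinarith [Nat.zero_le (c ^ 3)]
  · rw [mul_comm, pow_mul]
    exact Nat.pow_le_pow_left Nat.lt_two_pow_self 3

theorem le_mul_log_of_two_mul_le {f : ℕ → ℕ}
    (hf : ∀ t₁ t₂, 1 ≤ t₁ → t₁ < t₂ → f t₁ = f t₂ → 2 * t₁ ≤ t₂) {T C : ℕ}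
    (hC : ∀ t ∈ Finset.Icc 1 T, f t ≤ C) : T ≤ (C + 1) * (Nat.log 2 T + 1) := by
  have hne : ∀ t₁ t₂, 1 ≤ t₁ → t₁ < t₂ → (f t₁, Nat.log 2 t₁) ≠ (f t₂, Nat.log 2 t₂) := by
    intro t₁ t₂ ht₁ hlt heq
    obtain ⟨hfeq, hlogeq⟩ := Prod.mk.inj heq
    have hlog : Nat.log 2 (t₁ * 2) ≤ Nat.log 2 t₂ :=
      Nat.log_mono_right (by linarith [hf t₁ t₂ ht₁ hlt hfeq])
    rw [Nat.log_mul_base one_lt_two (by omega)] at hlog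
    omega
  have hinj : Set.InjOn (fun t => (f t, Nat.log 2 t)) (Finset.Icc 1 T) := by
    intro t₁ ht₁ t₂ ht₂ heq
    rw [Finset.coe_Icc, Set.mem_Icc] at ht₁ ht₂
    rcases lt_trichotomy t₁ t₂ with hlt | heq' | hgt
    · exact absurd heq (hne t₁ t₂ ht₁.1 hlt)
    · exact heq'
    · exact absurd heq.symm (hne t₂ t₁ ht₂.1 hgt)
  have hmaps : Set.MapsTo (fun t => (f t, Nat.log 2 t)) (Finset.Icc 1 T)
      (Finset.range (C + 1) ×ˢ Finset.range (Nat.log 2 T + 1) : Finset (ℕ × ℕ)) := by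
    intro t ht
    rw [Finset.coe_Icc, Set.mem_Icc] at ht
    simp only [Finset.coe_product, Set.mem_prod, Finset.coe_range, Set.mem_Iio]
    exact ⟨Nat.lt_succ_of_le (hC t (Finset.mem_Icc.mpr ht)),
      Nat.lt_succ_of_le (Nat.log_mono_right ht.2)⟩
  simpa using Finset.card_le_card_of_injOn _ hmaps hinj

theorem exists_gt_and_mul_sq_lt_cube {f : ℕ → ℕ}
    (hf : ∀ t₁ t₂, 1 ≤ t₁ → t₁ < t₂ → f t₁ = f t₂ → 2 * t₁ ≤ t₂) (B K : ℕ) :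
    ∃ t, 1 ≤ t ∧ B < f t ∧ K * t ^ 2 < f t ^ 3 := by
  set a := B + K + 1 with ha
  obtain ⟨j, hj⟩ := exists_mul_succ_lt_two_pow (6 * a)
  by_contra! hsmall
  have hC : ∀ t ∈ Finset.Icc 1 (2 ^ (3 * j)), f t ≤ a * 2 ^ (2 * j) := by
    intro t ht
    rw [Finset.mem_Icc] at ht
    by_cases hB : f t ≤ B
    · exact hB.trans (by nlinarith [Nat.one_le_two_pow (n := 2 * j)])
    refine (Nat.pow_le_pow_iff_left (n := 3) (by norm_num)).mp ?_
    calc f t ^ 3 ≤ K * t ^ 2 := hsmall t ht.1 (by omega)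
      _ ≤ a ^ 3 * (2 ^ (3 * j)) ^ 2 := by
        gcongr
        · exact (by omega : K ≤ a).trans (Nat.le_self_pow (by norm_num) a)
        · exact ht.2
      _ = (a * 2 ^ (2 * j)) ^ 3 := by ring
  have hcount := le_mul_log_of_two_mul_le hf hC
  rw [Nat.log_pow one_lt_two] at hcount
  have hC1 : 1 ≤ a * 2 ^ (2 * j) := Nat.mul_le_mul (show 1 ≤ a by omega) Nat.one_le_two_pow
  have : (a * 2 ^ (2 * j) + 1) * (3 * j + 1) < 2 ^ (3 * j) :=
    calc (a * 2 ^ (2 * j) + 1) * (3 * j + 1) ≤ 2 ^ (2 * j) * (6 * a * (j + 1)) := by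
          nlinarith [Nat.zero_le j]
      _ < 2 ^ (2 * j) * 2 ^ j := by gcongr
      _ = 2 ^ (3 * j) := by ring
  omega

theorem sq_sub_mul_sq_pow_eq_of_pow_eq {d : ℤ} (hd0 : 0 ≤ d) (hd : ¬IsSquare d)
    {u v a b : ℤ} {n : ℕ} (h : ((u : ℝ) + v * √d) ^ n = a + b * √d) :
    (u ^ 2 - d * v ^ 2) ^ n = a ^ 2 - d * b ^ 2 := by
  let ι : ℤ√d →+* ℝ := Zsqrtd.lift ⟨√d, Real.mul_self_sqrt (by exact_mod_cast hd0)⟩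
  have hι : Function.Injective ι := Zsqrtd.lift_injective _ fun m hm => hd ⟨m, hm⟩
  have hpow : (⟨u, v⟩ : ℤ√d) ^ n = ⟨a, b⟩ := hι (by rw [map_pow]; simpa [ι] using h)
  have := congrArg Zsqrtd.normMonoidHom hpow
  rw [map_pow] at this
  simpa [Zsqrtd.normMonoidHom, Zsqrtd.norm_def, sq, mul_assoc] using this

theorem two_add_sqrt_le_of_sq_sub_mul_sq_eq_four {d u v : ℤ} (hd : 0 ≤ d)
    (hnorm : u ^ 2 - d * v ^ 2 = 4) (h : 2 < u + v * √d) : 2 + √d ≤ u + v * √d := by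
  have hs : √d ^ 2 = d := sq_sqrt (by exact_mod_cast hd)
  have hconj : ((u : ℝ) + v * √d) * (u - v * √d) = 4 := by
    linear_combination (by exact_mod_cast hnorm : (u : ℝ) ^ 2 - d * v ^ 2 = 4) - v ^ 2 * hs
  have hconj_pos : 0 < (u : ℝ) - v * √d := by nlinarith
  have hconj_lt : (u : ℝ) - v * √d < 2 := by nlinarith
  have hu : (1 : ℤ) < u := by exact_mod_cast (by linarith : (1 : ℝ) < u)
  have hv : (0 : ℤ) < v := by
    exact_mod_cast pos_of_mul_pos_left (by linarith : (0 : ℝ) < v * √d) (sqrt_nonneg _)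
  have hu2 : (2 : ℝ) ≤ u := by exact_mod_cast hu
  have hv1 : (1 : ℝ) ≤ v := by exact_mod_cast hv
  nlinarith [sqrt_nonneg (d : ℝ)]

theorem sq_add_one_eq_two_mul_of_pell {d : ℤ} (hd : 0 ≤ d) {x y : ℝ} (h : x ^ 2 - d * y ^ 2 = 1) :
    (x + y * √d) ^ 2 + 1 = 2 * x * (x + y * √d) := by
  linear_combination -h + y ^ 2 * sq_sqrt (by exact_mod_cast hd : (0 : ℝ) ≤ d)

theorem div_two_pow_ne_of_pell {d x y : ℤ} {n : ℕ} (hd0 : 0 < d) (hd : ¬IsSquare d) (hn : Odd n)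
    (hpell : x ^ 2 - d * y ^ 2 = 1) (hx : 0 < x) (hy : 0 < y) (hlarge : 4 ^ (n + 1) * x ^ 2 ≤ d ^ n)
    (u v : ℤ) : (((u : ℝ) + v * √d) / 2) ^ n ≠ x + y * √d := by
  intro h
  have h4 (R : Type) [CommRing R] : (4 : R) ^ n = ((2 : R) ^ n) ^ 2 := by
    rw [← pow_mul, mul_comm, pow_mul]; norm_num
  have hs : √d ^ 2 = d := sq_sqrt (by exact_mod_cast hd0.le)
  set ε : ℝ := x + y * √d
  have hα : ((u : ℝ) + v * √d) ^ n = 2 ^ n * ε := by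
    rw [← h, div_pow, mul_div_cancel₀ _ (by positivity)]
  have hnorm : u ^ 2 - d * v ^ 2 = 4 := by
    refine hn.strictMono_pow.injective ?_
    have hpow : ((u : ℝ) + v * √d) ^ n = ((2 ^ n * x : ℤ) : ℝ) + ((2 ^ n * y : ℤ) : ℝ) * √d := by
      rw [hα]; push_cast; ring
    rw [sq_sub_mul_sq_pow_eq_of_pow_eq hd0.le hd hpow, h4 ℤ]
    linear_combination ((2 : ℤ) ^ n) ^ 2 * hpell
  have hpellR : (x : ℝ) ^ 2 - d * y ^ 2 = 1 := by exact_mod_cast hpell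
  have hyR : (0 : ℝ) < y := by exact_mod_cast hy
  have hε1 : 1 < ε := by
    have : (1 : ℝ) ≤ x := by exact_mod_cast hx
    have : 0 < √(d : ℝ) := sqrt_pos.mpr (by exact_mod_cast hd0)
    nlinarith
  have hε2 : ε < 2 * x := by nlinarith
  have hα2 : 2 < (u : ℝ) + v * √d := by
    rw [← hn.strictMono_pow.lt_iff_lt, hα]
    nlinarith [pow_pos (two_pos : (0:ℝ) < 2) n]
  have hαs : √d < (u : ℝ) + v * √d := by
    linarith [two_add_sqrt_le_of_sq_sub_mul_sq_eq_four hd0.le hnorm hα2]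
  have := pow_lt_pow_left₀ hαs (sqrt_nonneg _) (n := 2 * n) (by have := hn.pos; omega)
  rw [pow_mul _ 2 n, hs, pow_mul' _ 2 n, hα, mul_pow, ← h4 ℝ] at this
  have hlargeR : (4 : ℝ) ^ (n + 1) * x ^ 2 ≤ d ^ n := by exact_mod_cast hlarge
  rw [pow_succ] at hlargeR
  have hε4 : ε ^ 2 < 4 * x ^ 2 := by nlinarith
  nlinarith [mul_lt_mul_of_pos_left hε4 (pow_pos (by norm_num : (0:ℝ) < 4) n)]

theorem one_le_and_two_le_of_sq_mul_eq_sq_sub_one {r M X : ℕ} (h : r ^ 2 * M = X ^ 2 - 1)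
    (hX : 2 ≤ X) : 1 ≤ r ∧ 2 ≤ M := by
  have hX2 : 4 ≤ X ^ 2 := by nlinarith
  have hpos : 0 < r ^ 2 * M := by omega
  refine ⟨Nat.pos_of_ne_zero (by rintro rfl; simp at hpos), ?_⟩
  by_contra! hM
  obtain rfl : M = 1 := by have := Nat.pos_of_mul_pos_left hpos; omega
  refine Nat.not_exists_sq' (m := X - 1) (n := X ^ 2 - 1) ?_ ?_ ⟨r, by simpa using h⟩
  · have : 1 ≤ X := by omega
    zify [this, hX2.trans' (by norm_num : 1 ≤ 4)]
    nlinarith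
  · rw [Nat.sub_add_cancel (by omega)]; omega

theorem not_isSquare_of_squarefree {d : ℤ} (hd : Squarefree d) (h : 1 < d) : ¬IsSquare d := by
  rintro ⟨m, rfl⟩
  rcases Int.isUnit_iff.mp (hd m dvd_rfl) with rfl | rfl <;> norm_num at h

/-- for every odd prime `p` there are infinitely many squarefree
integers `M ≥ 2` such that for some integers `t, r ≥ 1` with `p⁴t² − 1 = M·r²`,
the norm-one unit `ε = p²t + r√M` of `O_{ℚ(√M)}` satisfies
`ε² ≡ −1 (mod p²·O_K)` (so it is a local `p`th power at `p`) but is not a `p`th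
power in `O_{ℚ(√M)}`; hence there are infinitely many non-`p`-rational real
quadratic fields. -/
theorem infinitely_many_non_p_rational
    (p : ℕ) (hp : p.Prime) (hodd : Odd p) :
    {M : ℤ | 2 ≤ M ∧ Squarefree M ∧
      ∃ t r : ℤ, 1 ≤ t ∧ 1 ≤ r ∧ (p : ℤ) ^ 4 * t ^ 2 - 1 = M * r ^ 2 ∧
        (∃ gu gv : ℤ,
          ((p : ℝ) ^ 2 * (t : ℝ) + (r : ℝ) * Real.sqrt M) ^ 2 + 1 =
            (p : ℝ) ^ 2 * ((gu : ℝ) + (gv : ℝ) * Real.sqrt M)) ∧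
        ¬∃ u v : ℤ, (4 : ℤ) ∣ u ^ 2 - M * v ^ 2 ∧
          (((u : ℝ) + (v : ℝ) * Real.sqrt M) / 2) ^ p =
            (p : ℝ) ^ 2 * (t : ℝ) + (r : ℝ) * Real.sqrt M}.Infinite := by
  have hp3 : 3 ≤ p := by have := hp.two_le; obtain ⟨k, rfl⟩ := hodd; omega
  choose M r hMr hM using fun t : ℕ => Nat.sq_mul_squarefree (p ^ 4 * t ^ 2 - 1)
  have hbounds (t : ℕ) (ht : 1 ≤ t) : 1 ≤ r t ∧ 2 ≤ M t :=
    one_le_and_two_le_of_sq_mul_eq_sq_sub_one (by rw [hMr]; ring_nf) (by nlinarith : 2 ≤ p ^ 2 * t)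
  have hpell (t : ℕ) (ht : 1 ≤ t) : ((p : ℤ) ^ 2 * t) ^ 2 - M t * r t ^ 2 = 1 := by
    have := congrArg (Nat.cast : ℕ → ℤ) (hMr t)
    push_cast [Nat.one_le_iff_ne_zero.mpr (by positivity : p ^ 4 * t ^ 2 ≠ 0)] at this
    linear_combination -this
  have hgap (t₁ t₂ : ℕ) (ht₁ : 1 ≤ t₁) (hlt : t₁ < t₂) (hM : M t₁ = M t₂) : 2 * t₁ ≤ t₂ := by
    have := two_mul_le_of_pell_of_lt (by have := (hbounds t₂ (by omega)).2; omega)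
      (by positivity) (by positivity) (by positivity) (hM ▸ hpell t₁ ht₁) (hpell t₂ (by omega))
      (by gcongr)
    exact_mod_cast le_of_mul_le_mul_left (by linarith : (p : ℤ) ^ 2 * (2 * t₁) ≤ p ^ 2 * t₂)
      (by positivity)
  refine Set.infinite_of_forall_exists_gt fun B => ?_
  obtain ⟨t, ht, hB, hlarge⟩ := exists_gt_and_mul_sq_lt_cube hgap B.toNat (4 ^ (p + 1) * p ^ 4)
  obtain ⟨hr, hM2⟩ := hbounds t ht
  refine ⟨M t, ⟨by exact_mod_cast hM2, Int.squarefree_natCast.mpr (hM t), t, r t,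
    by exact_mod_cast ht, by exact_mod_cast hr, by linear_combination hpell t ht,
    ⟨2 * p ^ 2 * t ^ 2, 2 * t * r t, ?_⟩, ?_⟩, by omega⟩
  · rw [sq_add_one_eq_two_mul_of_pell (by positivity) (by exact_mod_cast hpell t ht)]
    push_cast
    ring
  · rintro ⟨u, v, -, h⟩
    refine div_two_pow_ne_of_pell (by omega)
      (not_isSquare_of_squarefree (Int.squarefree_natCast.mpr (hM t)) (by omega)) hodd
      (hpell t ht) (by positivity) (by omega) ?_ u v (by push_cast; exact h)
    have hcube : M t ^ 3 ≤ M t ^ p := Nat.pow_le_pow_right (by omega) hp3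
    have : 4 ^ (p + 1) * (p ^ 2 * t) ^ 2 ≤ M t ^ p := by linarith
    exact_mod_cast this
end
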